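/- Assume conditions (I1)–(I5). If (uₙ) ⊂ X⁺ is a bounded sequence with 𝒥̃(uₙ) → c and 𝒥̃'(uₙ) → 0 in the dual of X⁺, then the sequence vₙ := m(uₙ) ⊂ M is bounded in X, J(vₙ) → c, and J'(vₙ) → 0 in the dual of X; that is, (m(uₙ)) is a bounded Palais–Smale sequence for J at level c. -/

import Mathlib

open Topology Filter Set

noncomputable section

variable {X : Type*} [NormedAddCommGroup X] [NormedSpace ℝ X]

/-- Weak convergence of a sequence: `f (u n) → f w` for every continuous linear functional. -/
def WConv (u : ℕ → X) (w : X) : Prop :=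
  ∀ f : X →L[ℝ] ℝ, Tendsto (fun n => f (u n)) atTop (𝓝 (f w))

/-- The setting: `X` is a reflexive Banach space with a topological direct sum decomposition
`X = X⁺ ⊕ X⁻` into closed subspaces, `X⁺` is a Hilbert space (its norm satisfies the
parallelogram law), `‖u‖² = ‖u⁺‖² + ‖u⁻‖²`, and `I : X → ℝ` is of class `C¹`. -/
structure Setting (X : Type*) [NormedAddCommGroup X] [NormedSpace ℝ X] where
  complete : CompleteSpace X
  reflexive : Function.Surjective (NormedSpace.inclusionInDoubleDual ℝ X)
  Xp : Submodule ℝ X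
  Xm : Submodule ℝ X
  Xp_closed : IsClosed (Xp : Set X)
  Xm_closed : IsClosed (Xm : Set X)
  compl : IsCompl Xp Xm
  P : X →ₗ[ℝ] X
  Pm : X →ₗ[ℝ] X
  P_mem : ∀ u, P u ∈ Xp
  Pm_mem : ∀ u, Pm u ∈ Xm
  P_add_Pm : ∀ u, P u + Pm u = u
  P_cont : Continuous P
  Pm_cont : Continuous Pm
  norm_sq : ∀ u : X, ‖u‖ ^ 2 = ‖P u‖ ^ 2 + ‖Pm u‖ ^ 2
  parallelogram : ∀ u ∈ Xp, ∀ v ∈ Xp,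
    ‖u + v‖ ^ 2 + ‖u - v‖ ^ 2 = 2 * ‖u‖ ^ 2 + 2 * ‖v‖ ^ 2
  I : X → ℝ
  I_C1 : ContDiff ℝ 1 I

namespace Setting

variable (S : Setting X)

/-- The functional `J(u) = ½‖u⁺‖² − I(u)`. -/
def J : X → ℝ := fun u => (1 / 2) * ‖S.P u‖ ^ 2 - S.I u

/-- `M = {u ∈ X : I'(u)v = 0 for all v ∈ X⁻}`. -/
def M : Set X := {u | ∀ v ∈ S.Xm, fderiv ℝ S.I u v = 0}

/-- The Nehari–Pankov set `N = {u ∈ X \ X⁻ : J'(u)u = 0 and J'(u)v = 0 for all v ∈ X⁻}`. -/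
def N : Set X :=
  {u | u ∉ S.Xm ∧ fderiv ℝ S.J u u = 0 ∧ ∀ v ∈ S.Xm, fderiv ℝ S.J u v = 0}

/-- `T`-convergence: `uₙ⁺ → u⁺` in norm and `uₙ⁻ ⇀ u⁻` weakly. -/
def TConv (u : ℕ → X) (w : X) : Prop :=
  Tendsto (fun n => S.P (u n)) atTop (𝓝 (S.P w)) ∧ WConv (fun n => S.Pm (u n)) (S.Pm w)

/-- (I1): `I(u) ≥ I(0) = 0`. -/
def I1 : Prop := S.I 0 = 0 ∧ ∀ u, 0 ≤ S.I u

/-- (I2): `I` is sequentially `T`-lower semicontinuous. -/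
def I2 : Prop := ∀ (u : ℕ → X) (w : X), S.TConv u w →
  S.I w ≤ atTop.liminf fun n => S.I (u n)

/-- (I3): if `uₙ →_T u` and `I(uₙ) → I(u)` then `uₙ → u` in norm. -/
def I3 : Prop := ∀ (u : ℕ → X) (w : X), S.TConv u w →
  Tendsto (fun n => S.I (u n)) atTop (𝓝 (S.I w)) → Tendsto u atTop (𝓝 w)

/-- (I4): `‖uₙ⁺‖ + I(uₙ) → ∞` whenever `‖uₙ‖ → ∞`. -/
def I4 : Prop := ∀ u : ℕ → X, Tendsto (fun n => ‖u n‖) atTop atTop →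
  Tendsto (fun n => ‖S.P (u n)‖ + S.I (u n)) atTop atTop

/-- (I5): if `u ∈ M` then `I(u) < I(u + v)` for every `v ∈ X⁻ \ {0}`. -/
def I5 : Prop := ∀ u ∈ S.M, ∀ v ∈ S.Xm, v ≠ 0 → S.I u < S.I (u + v)

/-- `m : X⁺ → M` assigns to each `w ∈ X⁺` the point `m(w) ∈ M ∩ (w + X⁻)` which is the
unique maximizer of `J` on `w + X⁻`. -/
def IsMaxMap (m : X → X) : Prop :=
  ∀ w ∈ S.Xp, m w ∈ S.M ∧ m w - w ∈ S.Xm ∧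
    ∀ z ∈ S.Xm, w + z ≠ m w → S.J (w + z) < S.J (m w)

/-- The reduced functional `𝒥̃ = J ∘ m` on `X⁺`. -/
def Jt (m : X → X) : ↥S.Xp → ℝ := fun w => S.J (m (w : X))

/-- (I6): with radius `r` the infimum `a` of `J` on the sphere of radius `r` in `X⁺`
is positive. -/
def I6 (r a : ℝ) : Prop :=
  0 < r ∧ a = sInf (S.J '' {u : X | u ∈ S.Xp ∧ ‖u‖ = r}) ∧ 0 < a

/-- (I7): `Q` is an infinite-dimensional closed subspace of `X⁺` such that
`I(m(tₙuₙ))/tₙ² → ∞` whenever `tₙ → ∞`, `uₙ ∈ Q` and `uₙ → u ≠ 0`. -/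
def I7 (m : X → X) (Q : Submodule ℝ X) : Prop :=
  Q ≤ S.Xp ∧ IsClosed (Q : Set X) ∧ ¬ FiniteDimensional ℝ Q ∧
    ∀ (t : ℕ → ℝ) (u : ℕ → X) (w : X), Tendsto t atTop atTop → (∀ n, u n ∈ Q) →
      Tendsto u atTop (𝓝 w) → w ≠ 0 →
      Tendsto (fun n => S.I (m (t n • u n)) / (t n) ^ 2) atTop atTop

/-- (I8): `((t²−1)/2)·I'(u)u + t·I'(u)v + I(u) − I(tu+v) ≤ 0` for `u ∈ N`, `t ≥ 0`,
`v ∈ X⁻`. -/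
def I8 : Prop :=
  ∀ u ∈ S.N, ∀ t : ℝ, 0 ≤ t → ∀ v ∈ S.Xm,
    ((t ^ 2 - 1) / 2) * fderiv ℝ S.I u u + t * fderiv ℝ S.I u v
      + S.I u - S.I (t • u + v) ≤ 0

end Setting

section WSC
variable {E : Type*} [NormedAddCommGroup E] [NormedSpace ℝ E]

/-- Limit of a bounded real sequence along an ultrafilter. -/
lemma ulim_exists (U : Ultrafilter ℕ) (r : ℕ → ℝ) (C : ℝ) (h : ∀ n, |r n| ≤ C) :
    ∃ L, |L| ≤ C ∧ Tendsto r (↑U) (𝓝 L) := by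
  have hle : ↑(U.map r) ≤ 𝓟 (Icc (-C) C) := by
    rw [Ultrafilter.coe_map, le_principal_iff, mem_map]
    filter_upwards [univ_mem] with n _
    exact abs_le.mp (h n)
  obtain ⟨L, hL, hle'⟩ := isCompact_Icc.ultrafilter_le_nhds (U.map r) hle
  exact ⟨L, abs_le.mpr hL, hle'⟩

/-- A weak cluster point along a fixed ultrafilter, lying in a given closed submodule,
for a bounded sequence in a reflexive space. -/
lemma cluster_exists
    (refl : Function.Surjective (NormedSpace.inclusionInDoubleDual ℝ E))
    (U : Ultrafilter ℕ) (y : ℕ → E) (C : ℝ) (hy : ∀ n, ‖y n‖ ≤ C)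
    (D : Submodule ℝ E) (hDc : IsClosed (D : Set E)) (hyD : ∀ n, y n ∈ D) :
    ∃ w : E, w ∈ D ∧ ∀ f : E →L[ℝ] ℝ, Tendsto (fun n => f (y n)) (↑U) (𝓝 (f w)) := by
  have hC : 0 ≤ C := le_trans (norm_nonneg _) (hy 0)
  have key : ∀ f : E →L[ℝ] ℝ, ∃ L, |L| ≤ C * ‖f‖ ∧
      Tendsto (fun n => f (y n)) (↑U) (𝓝 L) := by
    intro f
    refine ulim_exists U _ (C * ‖f‖) fun n => ?_
    calc |f (y n)| ≤ ‖f‖ * ‖y n‖ := f.le_opNorm _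
    _ ≤ ‖f‖ * C := by gcongr; exact hy n
    _ = C * ‖f‖ := mul_comm _ _
  choose L hLb hLt using key
  have hadd : ∀ f g : E →L[ℝ] ℝ, L (f + g) = L f + L g := by
    intro f g
    refine tendsto_nhds_unique (hLt (f + g)) ?_
    simpa using (hLt f).add (hLt g)
  have hsmul : ∀ (c : ℝ) (f : E →L[ℝ] ℝ), L (c • f) = c * L f := by
    intro c f
    refine tendsto_nhds_unique (hLt (c • f)) ?_
    simpa using (hLt f).const_mul c
  set Flin : StrongDual ℝ E →ₗ[ℝ] ℝ :=
    { toFun := L, map_add' := hadd, map_smul' := hsmul }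
  set F : StrongDual ℝ (StrongDual ℝ E) :=
    LinearMap.mkContinuous Flin C (fun f => by rw [Real.norm_eq_abs]; exact hLb f)
  obtain ⟨w, hw⟩ := refl F
  have hwf : ∀ f : E →L[ℝ] ℝ, f w = L f := by
    intro f
    have := NormedSpace.dual_def ℝ E w f
    rw [hw] at this
    exact this.symm
  refine ⟨w, ?_, fun f => by rw [hwf f]; exact hLt f⟩
  -- membership in D
  by_contra hwD
  obtain ⟨f, u, hfa, hfu⟩ := geometric_hahn_banach_closed_point D.convex hDc hwD
  have hfD : ∀ d ∈ D, f d = 0 := by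
    intro d hd
    by_contra hfd
    have hmem : ((u + 1) / f d) • d ∈ D := D.smul_mem _ hd
    have := hfa _ hmem
    rw [map_smul, smul_eq_mul, div_mul_cancel₀ _ hfd] at this
    linarith
  have h0 : L f = 0 := by
    refine tendsto_nhds_unique (hLt f) ?_
    have : (fun n => f (y n)) = fun _ => (0 : ℝ) := funext fun n => hfD _ (hyD n)
    rw [this]; exact tendsto_const_nhds
  have : f w = 0 := by rw [hwf f, h0]
  have h0D : f 0 < u := hfa 0 D.zero_mem
  simp at h0D
  linarith

/-- Weak sequential compactness of bounded sequences in a reflexive space. -/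
theorem weak_seq_compact
    (refl : Function.Surjective (NormedSpace.inclusionInDoubleDual ℝ E))
    (v : ℕ → E) (C : ℝ) (hv : ∀ n, ‖v n‖ ≤ C) :
    ∃ (w : E) (φ : ℕ → ℕ), StrictMono φ ∧
      ∀ f : E →L[ℝ] ℝ, Tendsto (fun k => f (v (φ k))) atTop (𝓝 (f w)) := by
  classical
  have hC : 0 ≤ C := le_trans (norm_nonneg _) (hv 0)
  set D : Submodule ℝ E := (Submodule.span ℝ (Set.range v)).topologicalClosure with hD
  have hDc : IsClosed (D : Set E) := Submodule.isClosed_topologicalClosure _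
  have hvD : ∀ n, v n ∈ D :=
    fun n => (Submodule.le_topologicalClosure _) (Submodule.subset_span ⟨n, rfl⟩)
  -- separability: a countable set whose closure contains D
  have hsep : TopologicalSpace.IsSeparable (D : Set E) := by
    have h1 : TopologicalSpace.IsSeparable (Set.range v) :=
      (countable_range v).isSeparable
    have h2 := h1.span (R := ℝ)
    have := h2.closure
    rwa [Submodule.topologicalClosure_coe]
  obtain ⟨c, hcc, hcd⟩ := hsep
  obtain ⟨x, hx⟩ := Set.Countable.exists_eq_range (hcc.insert 0) (insert_nonempty 0 c)
  have hDx : (D : Set E) ⊆ closure (Set.range x) := by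
    rw [← hx]; exact hcd.trans (closure_mono (subset_insert _ _))
  -- norming functionals
  have hfm : ∀ m, ∃ g : E →L[ℝ] ℝ, ‖g‖ ≤ 1 ∧ g (x m) = ‖x m‖ := fun m =>
    exists_dual_vector'' ℝ (x m)
  choose fm hfm1 hfm2 using hfm
  -- separation on closure (range x)
  have sep : ∀ d ∈ closure (Set.range x), (∀ m, fm m d = 0) → d = 0 := by
    intro d hd h0
    by_contra hd0
    have hpos : 0 < ‖d‖ := norm_pos_iff.mpr hd0
    obtain ⟨p, hp, hpd⟩ := Metric.mem_closure_iff.mp hd ( ‖d‖/3) (by linarith)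
    obtain ⟨m, rfl⟩ := hp
    have h1 : ‖x m‖ = fm m (x m) - fm m d := by rw [h0 m, hfm2 m]; ring
    have h2 : |fm m (x m) - fm m d| ≤ ‖x m - d‖ := by
      have := (fm m).le_opNorm (x m - d)
      have h3 : fm m (x m - d) = fm m (x m) - fm m d := by rw [map_sub]
      calc |fm m (x m) - fm m d| = ‖fm m (x m - d)‖ := by rw [h3]; rfl
      _ ≤ ‖fm m‖ * ‖x m - d‖ := this
      _ ≤ 1 * ‖x m - d‖ := by gcongr; exact hfm1 m
      _ = ‖x m - d‖ := one_mul _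
    have h4 : ‖x m - d‖ < ‖d‖/3 := by rw [← dist_eq_norm]; rwa [dist_comm]
    have h5 : ‖x m‖ ≤ ‖x m - d‖ := by rw [h1]; exact (le_abs_self _).trans h2
    have h6 : ‖d‖ - ‖x m‖ ≤ ‖d - x m‖ := norm_sub_norm_le d (x m)
    rw [norm_sub_rev] at h6
    linarith

  -- diagonal extraction via sequential compactness of a product of intervals
  have hcomp : IsCompact (Set.pi (univ : Set ℕ) (fun _ => Icc (-C) C)) :=
    isCompact_univ_pi (fun _ => isCompact_Icc)
  have hseq : IsSeqCompact (Set.pi (univ : Set ℕ) (fun _ => Icc (-C) C)) :=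
    hcomp.isSeqCompact
  have hmem : ∀ n, (fun m => fm m (v n)) ∈ Set.pi (univ : Set ℕ) (fun _ => Icc (-C) C) := by
    intro n m _
    refine abs_le.mp ?_
    calc |fm m (v n)| ≤ ‖fm m‖ * ‖v n‖ := (fm m).le_opNorm _
    _ ≤ 1 * C := mul_le_mul (hfm1 m) (hv n) (norm_nonneg _) zero_le_one
    _ = C := one_mul C
  obtain ⟨a, -, φ, hφ, hφt⟩ := hseq hmem
  have ha : ∀ m, Tendsto (fun k => fm m (v (φ k))) atTop (𝓝 (a m)) :=
    fun m => tendsto_pi_nhds.mp hφt m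
  set U : Ultrafilter ℕ := Ultrafilter.of atTop with hUdef
  have hU : (U : Filter ℕ) ≤ atTop := Ultrafilter.of_le atTop
  set y : ℕ → E := v ∘ φ with hy
  obtain ⟨w, hwD, hwt⟩ := cluster_exists refl U y C (fun n => hv _) D hDc (fun n => hvD _)
  have hfmw : ∀ m, Tendsto (fun k => fm m (y k)) atTop (𝓝 (fm m w)) := by
    intro m
    have h1 : Tendsto (fun k => fm m (y k)) (↑U) (𝓝 (a m)) := (ha m).mono_left hU
    have h2 := hwt (fm m)
    have h3 : a m = fm m w := tendsto_nhds_unique h1 h2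
    rw [← h3]; exact ha m
  refine ⟨w, φ, hφ, fun f => ?_⟩
  apply tendsto_of_subseq_tendsto
  intro ns hns
  set z : ℕ → E := y ∘ ns with hz
  obtain ⟨w', hw'D, hw't⟩ := cluster_exists refl U z C (fun n => hv _) D hDc (fun n => hvD _)
  have hww' : w = w' := by
    have hdm : ∀ m, fm m (w - w') = 0 := by
      intro m
      have h1 : Tendsto (fun j => fm m (z j)) atTop (𝓝 (fm m w)) := (hfmw m).comp hns
      have h2 : Tendsto (fun j => fm m (z j)) (↑U) (𝓝 (fm m w)) := h1.mono_left hU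
      have h3 := hw't (fm m)
      have h4 : fm m w = fm m w' := tendsto_nhds_unique h2 h3
      rw [map_sub, h4, sub_self]
    have h5 : w - w' = 0 := sep _ (hDx (D.sub_mem hwD hw'D)) hdm
    exact sub_eq_zero.mp h5
  have hzt : Tendsto (fun j => f (z j)) (↑U) (𝓝 (f w)) := by rw [hww']; exact hw't f
  have hfreq : ∀ j : ℕ, ∃ᶠ k in atTop, |f (z k) - f w| < 1/((j:ℝ)+1) := by
    intro j
    have hev : ∀ᶠ k in (↑U : Filter ℕ), |f (z k) - f w| < 1/((j:ℝ)+1) := by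
      have := Metric.tendsto_nhds.mp hzt (1/((j:ℝ)+1)) (by positivity)
      filter_upwards [this] with k hk
      rwa [Real.dist_eq] at hk
    exact hev.frequently.filter_mono hU
  obtain ⟨ms, hmsmono, hmsP⟩ := extraction_forall_of_frequently hfreq
  refine ⟨ms, ?_⟩
  have : Tendsto (fun n => |f (z (ms n)) - f w|) atTop (𝓝 0) := by
    refine squeeze_zero (fun n => abs_nonneg _) (fun n => (hmsP n).le) ?_
    exact tendsto_one_div_add_atTop_nhds_zero_nat
  have h6 : Tendsto (fun n => f (z (ms n))) atTop (𝓝 (f w)) := by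
    rw [tendsto_iff_dist_tendsto_zero]
    simpa [Real.dist_eq] using this
  exact h6

end WSC

namespace Setting

variable (S : Setting X)

/-! ### Basic projection lemmas -/

def Pc : X →L[ℝ] X := ⟨S.P, S.P_cont⟩
def Pmc : X →L[ℝ] X := ⟨S.Pm, S.Pm_cont⟩

@[simp] lemma Pc_apply (u : X) : S.Pc u = S.P u := rfl
@[simp] lemma Pmc_apply (u : X) : S.Pmc u = S.Pm u := rfl

lemma Pm_eq (u : X) : S.Pm u = u - S.P u :=
  eq_sub_of_add_eq' (S.P_add_Pm u)

lemma P_eq_self {u : X} (hu : u ∈ S.Xp) : S.P u = u := by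
  have h1 : u - S.P u ∈ S.Xp := S.Xp.sub_mem hu (S.P_mem u)
  have h2 : u - S.P u ∈ S.Xm := by rw [← S.Pm_eq]; exact S.Pm_mem u
  have h3 : u - S.P u = 0 := Submodule.disjoint_def.mp S.compl.disjoint _ h1 h2
  exact (sub_eq_zero.mp h3).symm

lemma P_eq_zero {u : X} (hu : u ∈ S.Xm) : S.P u = 0 := by
  have h2 : S.P u ∈ S.Xm := by
    have h1 : S.P u = u - S.Pm u := eq_sub_of_add_eq (S.P_add_Pm u)
    rw [h1]; exact S.Xm.sub_mem hu (S.Pm_mem u)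
  exact Submodule.disjoint_def.mp S.compl.disjoint _ (S.P_mem u) h2

lemma norm_P_le (u : X) : ‖S.P u‖ ≤ ‖u‖ := by
  nlinarith [S.norm_sq u, norm_nonneg (S.P u), norm_nonneg u, sq_nonneg (‖S.Pm u‖)]

/-- `P (m w) = w` for `w ∈ Xp` and a maximizer map `m`. -/
lemma P_m_eq {m : X → X} (hm : S.IsMaxMap m) {w : X} (hw : w ∈ S.Xp) :
    S.P (m w) = w := by
  have h1 : m w - w ∈ S.Xm := (hm w hw).2.1
  have h0 : S.P (m w - w) = 0 := S.P_eq_zero h1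
  have h2 : S.P (m w) - S.P w = 0 := by rw [← map_sub]; exact h0
  have h3 : S.P w = w := S.P_eq_self hw
  calc S.P (m w) = S.P w := sub_eq_zero.mp h2
  _ = w := h3

lemma J_le_max {m : X → X} (hm : S.IsMaxMap m) {w : X} (hw : w ∈ S.Xp)
    {z : X} (hz : z ∈ S.Xm) : S.J (w + z) ≤ S.J (m w) := by
  rcases eq_or_ne (w + z) (m w) with h | h
  · rw [h]
  · exact ((hm w hw).2.2 z hz h).le

/-! ### Hilbert structure on `Xp` and differentiability of `J` -/

def ips : InnerProductSpace ℝ ↥S.Xp :=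
  InnerProductSpace.ofNorm ℝ (fun x y => by
    have := S.parallelogram (x : X) x.2 (y : X) y.2
    have hx : ‖x + y‖ = ‖(x : X) + (y : X)‖ := rfl
    have hy : ‖x - y‖ = ‖(x : X) - (y : X)‖ := rfl
    rw [hx, hy, show ‖x‖ = ‖(x : X)‖ from rfl, show ‖y‖ = ‖(y : X)‖ from rfl]
    nlinarith [this])

def Pp : X →L[ℝ] ↥S.Xp := S.Pc.codRestrict S.Xp (fun u => S.P_mem u)

@[simp] lemma Pp_coe (u : X) : ((S.Pp u : ↥S.Xp) : X) = S.P u := rfl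

lemma norm_Pp (u : X) : ‖S.Pp u‖ = ‖S.P u‖ := rfl

lemma J_eq (u : X) : S.J u = (1 / 2) * ‖S.Pp u‖ ^ 2 - S.I u := rfl

lemma contDiffJ : ContDiff ℝ 1 S.J := by
  letI := S.ips
  have h1 : ContDiff ℝ 1 (fun u : X => ‖S.Pp u‖ ^ 2) :=
    (contDiff_norm_sq ℝ (E := ↥S.Xp) (n := 1)).comp S.Pp.contDiff
  have : S.J = fun u => (1 / 2 : ℝ) * ‖S.Pp u‖ ^ 2 - S.I u := rfl
  rw [this]
  exact (contDiff_const.mul h1).sub S.I_C1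

lemma diffJ : Differentiable ℝ S.J := S.contDiffJ.differentiable one_ne_zero

lemma hasFDerivJ (u : X) : HasFDerivAt S.J (fderiv ℝ S.J u) u := (S.diffJ u).hasFDerivAt

lemma hasStrictFDerivJ (u : X) : HasStrictFDerivAt S.J (fderiv ℝ S.J u) u :=
  (S.contDiffJ.contDiffAt).hasStrictFDerivAt one_ne_zero

/-- The derivative of `J` in directions from `Xm` is `-I'`. -/
lemma fderivJ_Xm (u : X) {z : X} (hz : z ∈ S.Xm) :
    fderiv ℝ S.J u z = -(fderiv ℝ S.I u z) := by
  letI := S.ips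
  have hq : HasFDerivAt (fun u : X => ‖S.Pp u‖ ^ 2)
      (2 • (innerSL ℝ (S.Pp u)).comp S.Pp) u := S.Pp.hasFDerivAt.norm_sq
  have hI : HasFDerivAt S.I (fderiv ℝ S.I u) u :=
    ((S.I_C1.differentiable one_ne_zero) u).hasFDerivAt
  have hJ : HasFDerivAt S.J ((1 / 2 : ℝ) • (2 • (innerSL ℝ (S.Pp u)).comp S.Pp)
      - fderiv ℝ S.I u) u := by
    have h2 : S.J = fun v => (1 / 2 : ℝ) * ‖S.Pp v‖ ^ 2 - S.I v := rfl
    rw [h2]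
    exact (hq.const_mul (1 / 2 : ℝ)).sub hI
  rw [hJ.fderiv]
  have hPpz : S.Pp z = 0 := by
    apply Subtype.ext
    simpa using S.P_eq_zero hz
  simp [hPpz]
  show innerSL ℝ (S.Pp u) (S.Pp z) = 0
  rw [hPpz, map_zero]

/-- Boundedness from (I4). -/
lemma bounded_of_I4 (hI4 : S.I4) (x : ℕ → X) (B : ℝ)
    (hP : ∀ n, ‖S.P (x n)‖ ≤ B) (hIb : ∀ n, S.I (x n) ≤ B) :
    ∃ C, ∀ n, ‖x n‖ ≤ C := by
  by_contra h
  push_neg at h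
  have hsel : ∀ k : ℕ, ∃ n, (k : ℝ) < ‖x n‖ := fun k => h k
  choose g hg using hsel
  have htop : Tendsto (fun k => ‖x (g k)‖) atTop atTop :=
    tendsto_atTop_mono (fun k => (hg k).le) tendsto_natCast_atTop_atTop
  have h2 := hI4 (fun k => x (g k)) htop
  have h3 : ∀ k, ‖S.P (x (g k))‖ + S.I (x (g k)) ≤ B + B :=
    fun k => add_le_add (hP _) (hIb _)
  obtain ⟨k, hk⟩ := (h2.eventually_gt_atTop (B + B)).exists
  exact absurd (h3 k) (not_le.mpr hk)

/-- Sequential continuity of the maximizer map `m`. -/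
lemma m_seq_cont (hI1 : S.I1) (hI2 : S.I2) (hI3 : S.I3) (hI4 : S.I4)
    {m : X → X} (hm : S.IsMaxMap m)
    (w : ℕ → ↥S.Xp) (w₀ : ↥S.Xp) (hw : Tendsto w atTop (𝓝 w₀)) :
    Tendsto (fun k => m (w k : X)) atTop (𝓝 (m (w₀ : X))) := by
  have hwX : Tendsto (fun k => (w k : X)) atTop (𝓝 (w₀ : X)) :=
    (continuous_subtype_val.tendsto _).comp hw
  set z₀ : X := m (w₀ : X) - (w₀ : X) with hz₀
  have hz₀m : z₀ ∈ S.Xm := (hm _ w₀.2).2.1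
  -- the lower bound sequence
  set Lb : ℕ → ℝ := fun k => S.J ((w k : X) + z₀) with hLb
  have hLbt : Tendsto Lb atTop (𝓝 (S.J (m (w₀ : X)))) := by
    have hc : Tendsto (fun k => (w k : X) + z₀) atTop (𝓝 ((w₀ : X) + z₀)) :=
      hwX.add tendsto_const_nhds
    have h0 : (w₀ : X) + z₀ = m (w₀ : X) := by rw [hz₀]; abel
    rw [← h0]
    exact (S.contDiffJ.continuous.tendsto _).comp hc
  have hLble : ∀ k, Lb k ≤ S.J (m (w k : X)) :=
    fun k => S.J_le_max hm (w k).2 hz₀m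
  -- lower bound for J (m (w k))
  obtain ⟨B₁, hB₁⟩ := hLbt.bddBelow_range
  have hB₁' : ∀ k, B₁ ≤ S.J (m (w k : X)) :=
    fun k => le_trans (hB₁ ⟨k, rfl⟩) (hLble k)
  -- upper bound for norms of w k
  have hwn : Tendsto (fun k => ‖(w k : X)‖) atTop (𝓝 ‖(w₀ : X)‖) := hwX.norm
  obtain ⟨W, hW⟩ := hwn.bddAbove_range
  have hW' : ∀ k, ‖(w k : X)‖ ≤ W := fun k => hW ⟨k, rfl⟩
  have hW0 : 0 ≤ W := le_trans (norm_nonneg _) (hW' 0)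
  -- J (m (w k)) = (1/2) ‖w k‖² - I (m (w k))
  have hJm : ∀ k, S.J (m (w k : X)) = (1/2) * ‖(w k : X)‖^2 - S.I (m (w k : X)) := by
    intro k
    have : S.P (m (w k : X)) = (w k : X) := S.P_m_eq hm (w k).2
    rw [Setting.J, this]
  have hIub : ∀ k, S.I (m (w k : X)) ≤ (1/2) * W^2 - B₁ := by
    intro k
    have h1 := hB₁' k
    rw [hJm k] at h1
    nlinarith [hW' k, norm_nonneg ((w k : X))]
  -- boundedness of (m (w k))
  obtain ⟨C, hC⟩ := S.bounded_of_I4 hI4 (fun k => m (w k : X))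
      (max W ((1/2) * W^2 - B₁))
      (fun k => by rw [S.P_m_eq hm (w k).2]; exact le_trans (hW' k) (le_max_left _ _))
      (fun k => le_trans (hIub k) (le_max_right _ _))
  have hJub : ∀ k, S.J (m (w k : X)) ≤ (1/2) * W^2 := by
    intro k
    rw [hJm k]
    nlinarith [hI1.2 (m (w k : X)), hW' k, norm_nonneg ((w k : X))]
  -- subsequence principle
  apply tendsto_of_subseq_tendsto
  intro ns hns
  -- extract convergence of J values
  have hJmem : ∀ j, S.J (m (w (ns j) : X)) ∈ Icc B₁ ((1/2) * W^2) :=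
    fun j => ⟨hB₁' _, hJub _⟩
  obtain ⟨l, -, ms₀, hms₀, hlJ⟩ :=
    tendsto_subseq_of_bounded (Metric.isBounded_Icc B₁ ((1/2) * W^2)) hJmem
  -- extract a weak limit
  obtain ⟨vb, ms₁, hms₁, hweak⟩ := weak_seq_compact S.reflexive
    (fun i => m (w (ns (ms₀ i)) : X)) C (fun i => hC _)
  -- the combined index sequence
  set ψ : ℕ → ℕ := fun i => ns (ms₀ (ms₁ i)) with hψ
  have hψt : Tendsto ψ atTop atTop :=
    hns.comp ((hms₀.tendsto_atTop).comp (hms₁.tendsto_atTop))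
  set v : ℕ → X := fun i => m (w (ψ i) : X) with hv
  have hvweak : ∀ f : X →L[ℝ] ℝ, Tendsto (fun i => f (v i)) atTop (𝓝 (f vb)) :=
    fun f => hweak f
  have hJl : Tendsto (fun i => S.J (v i)) atTop (𝓝 l) :=
    hlJ.comp (hms₁.tendsto_atTop)
  have hwψ : Tendsto (fun i => ((w (ψ i) : X))) atTop (𝓝 (w₀ : X)) :=
    hwX.comp hψt
  have hPv : ∀ i, S.P (v i) = (w (ψ i) : X) := fun i => S.P_m_eq hm (w _).2
  -- P vb = w₀
  have hPvb : S.P vb = (w₀ : X) := by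
    have hdiff : ∀ f : X →L[ℝ] ℝ, f (S.P vb - (w₀ : X)) = 0 := by
      intro f
      have h1 : Tendsto (fun i => f (S.P (v i))) atTop (𝓝 (f (S.P vb))) := by
        have := hvweak (f.comp S.Pc)
        simpa using this
      have h2 : Tendsto (fun i => f (S.P (v i))) atTop (𝓝 (f (w₀ : X))) := by
        have hc : Tendsto (fun i => S.P (v i)) atTop (𝓝 (w₀ : X)) := by
          have : (fun i => S.P (v i)) = fun i => ((w (ψ i) : X)) := funext hPv
          rw [this]; exact hwψ
        exact ((f.continuous.tendsto _).comp hc)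
      have := tendsto_nhds_unique h1 h2
      rw [map_sub, this, sub_self]
    exact sub_eq_zero.mp (NormedSpace.eq_zero_of_forall_dual_eq_zero ℝ hdiff)
  -- T-convergence
  have hT : S.TConv v vb := by
    constructor
    · rw [hPvb]
      have : (fun i => S.P (v i)) = fun i => ((w (ψ i) : X)) := funext hPv
      rw [this]; exact hwψ
    · intro f
      have := hvweak (f.comp S.Pmc)
      simpa using this
  -- I values converge
  have hIv : ∀ i, S.I (v i) = (1/2) * ‖(w (ψ i) : X)‖^2 - S.J (v i) := by
    intro i
    have := hJm (ψ i)
    rw [hv]; linarith [this]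
  have hIvt : Tendsto (fun i => S.I (v i)) atTop (𝓝 ((1/2) * ‖(w₀ : X)‖^2 - l)) := by
    have h1 : Tendsto (fun i => (1/2) * ‖(w (ψ i) : X)‖^2 - S.J (v i)) atTop
        (𝓝 ((1/2) * ‖(w₀ : X)‖^2 - l)) := by
      exact (((hwψ.norm).pow 2).const_mul (1/2)).sub hJl
    have h2 : (fun i => S.I (v i)) = fun i => (1/2) * ‖(w (ψ i) : X)‖^2 - S.J (v i) :=
      funext hIv
    rw [h2]; exact h1
  -- I2 gives I vb ≤ (1/2)‖w₀‖² - l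
  have hI2b : S.I vb ≤ (1/2) * ‖(w₀ : X)‖^2 - l := by
    have := hI2 v vb hT
    rwa [hIvt.liminf_eq] at this
  -- l ≥ J (m w₀)
  have hlge : S.J (m (w₀ : X)) ≤ l := by
    refine le_of_tendsto_of_tendsto' (hLbt.comp hψt) hJl (fun i => hLble (ψ i))
  -- vb ∈ w₀ + Xm
  have hvbXm : vb - (w₀ : X) ∈ S.Xm := by
    have h1 : vb - (w₀ : X) = S.Pm vb := by rw [S.Pm_eq, hPvb]
    rw [h1]; exact S.Pm_mem vb
  have hvbJ : S.J vb = (1/2) * ‖(w₀ : X)‖^2 - S.I vb := by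
    rw [Setting.J, hPvb]
  have hvbJge : S.J (m (w₀ : X)) ≤ S.J vb := by
    rw [hvbJ]; linarith
  -- vb = m w₀
  have hvbeq : vb = m (w₀ : X) := by
    by_contra hne
    have h1 : (w₀ : X) + (vb - (w₀ : X)) ≠ m (w₀ : X) := by
      intro h; apply hne; rw [← h]; abel
    have h2 := (hm _ w₀.2).2.2 _ hvbXm h1
    have h3 : (w₀ : X) + (vb - (w₀ : X)) = vb := by abel
    rw [h3] at h2
    linarith
  -- l = J vb and I converges to I vb
  have hl : l = S.J vb := by
    have : S.J vb ≤ l := by rw [hvbeq]; exact hlge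
    linarith [hvbJge, hlge, hvbeq ▸ le_refl (S.J vb)]
  have hIvb : Tendsto (fun i => S.I (v i)) atTop (𝓝 (S.I vb)) := by
    have h4 : S.I vb = (1/2) * ‖(w₀ : X)‖^2 - l := by rw [hl]; linarith [hvbJ]
    rw [h4]; exact hIvt
  have hvt : Tendsto v atTop (𝓝 vb) := hI3 v vb hT hIvb
  refine ⟨ms₀ ∘ ms₁, ?_⟩
  rw [hvbeq] at hvt
  exact hvt

lemma sandwich_abs {a b c : ℝ} (h1 : a ≤ b) (h2 : b ≤ c) : ‖b‖ ≤ ‖‖a‖ + ‖c‖‖ := by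
  have h0 : (0:ℝ) ≤ |a| + |c| := by positivity
  simp only [Real.norm_eq_abs, abs_of_nonneg h0]
  refine abs_le.mpr ⟨?_, ?_⟩
  · linarith [neg_abs_le a, abs_nonneg c]
  · linarith [le_abs_self c, abs_nonneg a]

/-- The reduced functional `Jt` is differentiable, with derivative `J'(m w₀)` restricted
to `Xp`. -/
lemma hasFDerivJt (hI1 : S.I1) (hI2 : S.I2) (hI3 : S.I3) (hI4 : S.I4)
    {m : X → X} (hm : S.IsMaxMap m) (w₀ : ↥S.Xp) :
    HasFDerivAt (S.Jt m) ((fderiv ℝ S.J (m (w₀ : X))).comp S.Xp.subtypeL) w₀ := by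
  set x₀ : X := m (w₀ : X) with hx₀
  set J' := fderiv ℝ S.J x₀ with hJ'
  have hJd : HasFDerivAt S.J J' x₀ := S.hasFDerivJ x₀
  have hJs : HasStrictFDerivAt S.J J' x₀ := S.hasStrictFDerivJ x₀
  have hcoe : Tendsto (fun w : ↥S.Xp => (w : X)) (𝓝 w₀) (𝓝 (w₀ : X)) :=
    continuous_subtype_val.tendsto w₀
  have hmc : Tendsto (fun w : ↥S.Xp => m (w : X)) (𝓝 w₀) (𝓝 x₀) := by
    rw [tendsto_iff_seq_tendsto]
    intro seq hseq
    exact S.m_seq_cont hI1 hI2 hI3 hI4 hm seq w₀ hseq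
  have hnorm_eq : ∀ w : ↥S.Xp, ‖(w : X) - (w₀ : X)‖ = ‖w - w₀‖ := fun w => rfl
  have hBig : (fun w : ↥S.Xp => (w : X) - (w₀ : X)) =O[𝓝 w₀] fun w => w - w₀ :=
    Asymptotics.isBigO_of_le _ (fun w => le_of_eq (hnorm_eq w))
  -- lower error term
  have he₁ : (fun w : ↥S.Xp =>
        S.J (x₀ + ((w : X) - (w₀ : X))) - S.J x₀ - J' ((w : X) - (w₀ : X)))
      =o[𝓝 w₀] fun w : ↥S.Xp => w - w₀ := by
    have hg : Tendsto (fun w : ↥S.Xp => x₀ + ((w : X) - (w₀ : X))) (𝓝 w₀) (𝓝 x₀) := by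
      have h2 : Tendsto (fun w : ↥S.Xp => x₀ + ((w : X) - (w₀ : X))) (𝓝 w₀)
          (𝓝 (x₀ + ((w₀ : X) - (w₀ : X)))) :=
        tendsto_const_nhds.add (hcoe.sub tendsto_const_nhds)
      simpa using h2
    have h1 := hJd.isLittleO.comp_tendsto hg
    have h2 : (fun w : ↥S.Xp =>
        S.J (x₀ + ((w : X) - (w₀ : X))) - S.J x₀ - J' ((w : X) - (w₀ : X)))
        =o[𝓝 w₀] fun w : ↥S.Xp => (w : X) - (w₀ : X) := by
      simpa only [Function.comp_def, add_sub_cancel_left] using h1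
    exact h2.trans_isBigO hBig
  -- upper error term
  have he₂ : (fun w : ↥S.Xp =>
        S.J (m (w : X)) - S.J (m (w : X) - ((w : X) - (w₀ : X))) - J' ((w : X) - (w₀ : X)))
      =o[𝓝 w₀] fun w : ↥S.Xp => w - w₀ := by
    have hk : Tendsto (fun w : ↥S.Xp => (m (w : X), m (w : X) - ((w : X) - (w₀ : X))))
        (𝓝 w₀) (𝓝 (x₀, x₀)) := by
      have h2 : Tendsto (fun w : ↥S.Xp => m (w : X) - ((w : X) - (w₀ : X))) (𝓝 w₀)
          (𝓝 (x₀ - ((w₀ : X) - (w₀ : X)))) :=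
        hmc.sub (hcoe.sub tendsto_const_nhds)
      have h2' : Tendsto (fun w : ↥S.Xp => m (w : X) - ((w : X) - (w₀ : X))) (𝓝 w₀)
          (𝓝 x₀) := by simpa using h2
      exact hmc.prodMk_nhds h2'
    have h1 := hJs.isLittleO.comp_tendsto hk
    have h2 : (fun w : ↥S.Xp =>
        S.J (m (w : X)) - S.J (m (w : X) - ((w : X) - (w₀ : X))) - J' ((w : X) - (w₀ : X)))
        =o[𝓝 w₀] fun w : ↥S.Xp => (w : X) - (w₀ : X) := by
      simpa only [Function.comp_def, sub_sub_cancel] using h1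
    exact h2.trans_isBigO hBig
  -- the two-sided estimate
  have hle : ∀ w : ↥S.Xp,
      S.J (x₀ + ((w : X) - (w₀ : X))) - S.J x₀ ≤ S.Jt m w - S.Jt m w₀ ∧
      S.Jt m w - S.Jt m w₀ ≤ S.J (m (w : X)) - S.J (m (w : X) - ((w : X) - (w₀ : X))) := by
    intro w
    have hJtw₀ : S.Jt m w₀ = S.J x₀ := rfl
    have hJtw : S.Jt m w = S.J (m (w : X)) := rfl
    constructor
    · have hz : x₀ - (w₀ : X) ∈ S.Xm := (hm _ w₀.2).2.1
      have he : (w : X) + (x₀ - (w₀ : X)) = x₀ + ((w : X) - (w₀ : X)) := by abel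
      have h3 := S.J_le_max hm w.2 hz
      rw [he] at h3
      rw [hJtw₀, hJtw]; linarith
    · have hz : m (w : X) - (w : X) ∈ S.Xm := (hm _ w.2).2.1
      have he : (w₀ : X) + (m (w : X) - (w : X)) = m (w : X) - ((w : X) - (w₀ : X)) := by
        abel
      have h3 := S.J_le_max hm w₀.2 hz
      rw [he] at h3
      rw [hJtw₀, hJtw]; linarith
  -- combine
  have hA : (fun w : ↥S.Xp => S.Jt m w - S.Jt m w₀ - J' ((w : X) - (w₀ : X)))
      =o[𝓝 w₀] fun w : ↥S.Xp => w - w₀ := by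
    have hsum := he₁.norm_left.add he₂.norm_left
    refine (Asymptotics.isBigO_of_le (𝓝 w₀) (fun w => ?_)).trans_isLittleO hsum
    exact sandwich_abs (by linarith [(hle w).1]) (by linarith [(hle w).2])
  have heq : (fun w : ↥S.Xp => S.Jt m w - S.Jt m w₀
        - ((fderiv ℝ S.J (m (w₀ : X))).comp S.Xp.subtypeL) (w - w₀))
      = fun w : ↥S.Xp => S.Jt m w - S.Jt m w₀ - J' ((w : X) - (w₀ : X)) := by
    funext w
    congr 1
  exact HasFDerivAt.of_isLittleO (by rw [heq]; exact hA)

end Setting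


/-- Under (I1)–(I5): if `(uₙ) ⊆ X⁺` is a bounded sequence with `𝒥̃(uₙ) → c` and
`𝒥̃'(uₙ) → 0`, then `(m(uₙ)) ⊆ M` is a bounded Palais–Smale sequence for `J` at the
level `c`. -/
theorem statement11
    {X : Type*} [NormedAddCommGroup X] [NormedSpace ℝ X]
    (S : Setting X)
    (hI1 : S.I1) (hI2 : S.I2) (hI3 : S.I3) (hI4 : S.I4) (hI5 : S.I5)
    (m : X → X) (hm : S.IsMaxMap m)
    (c : ℝ) (u : ℕ → ↥S.Xp) (hbd : ∃ C : ℝ, ∀ n, ‖u n‖ ≤ C)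
    (hval : Tendsto (fun n => S.Jt m (u n)) atTop (𝓝 c))
    (hder : Tendsto (fun n => ‖fderiv ℝ (S.Jt m) (u n)‖) atTop (𝓝 0)) :
    (∀ n, m (u n : X) ∈ S.M) ∧ (∃ C : ℝ, ∀ n, ‖m (u n : X)‖ ≤ C) ∧
      Tendsto (fun n => S.J (m (u n : X))) atTop (𝓝 c) ∧
      Tendsto (fun n => ‖fderiv ℝ S.J (m (u n : X))‖) atTop (𝓝 0) := by
  obtain ⟨C₀, hC₀⟩ := hbd
  have hC₀0 : 0 ≤ C₀ := le_trans (norm_nonneg _) (hC₀ 0)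
  have part1 : ∀ n, m (u n : X) ∈ S.M := fun n => (hm _ (u n).2).1
  have part3 : Tendsto (fun n => S.J (m (u n : X))) atTop (𝓝 c) := hval
  -- boundedness
  obtain ⟨B, hB⟩ := hval.bddBelow_range
  have hBle : ∀ n, B ≤ S.Jt m (u n) := fun n => hB ⟨n, rfl⟩
  have hJeq : ∀ n, S.J (m (u n : X)) = (1/2) * ‖(u n : X)‖^2 - S.I (m (u n : X)) := by
    intro n
    rw [Setting.J, S.P_m_eq hm (u n).2]
  have hIbd : ∀ n, S.I (m (u n : X)) ≤ (1/2) * C₀^2 - B := by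
    intro n
    have h1 := hBle n
    have h2 : S.Jt m (u n) = S.J (m (u n : X)) := rfl
    rw [h2, hJeq n] at h1
    have h3 : ‖(u n : X)‖ ≤ C₀ := hC₀ n
    nlinarith [norm_nonneg ((u n : X))]
  have hPbd : ∀ n, ‖S.P (m (u n : X))‖ ≤ C₀ := fun n => by
    rw [S.P_m_eq hm (u n).2]; exact hC₀ n
  obtain ⟨C, hC⟩ := S.bounded_of_I4 hI4 (fun n => m (u n : X))
    (max C₀ ((1/2) * C₀^2 - B))
    (fun n => le_trans (hPbd n) (le_max_left _ _))
    (fun n => le_trans (hIbd n) (le_max_right _ _))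
  refine ⟨part1, ⟨C, hC⟩, part3, ?_⟩
  -- derivative estimate
  have hfder : ∀ n, fderiv ℝ (S.Jt m) (u n)
      = (fderiv ℝ S.J (m (u n : X))).comp S.Xp.subtypeL :=
    fun n => (S.hasFDerivJt hI1 hI2 hI3 hI4 hm (u n)).fderiv
  have hbound : ∀ n, ‖fderiv ℝ S.J (m (u n : X))‖ ≤ ‖fderiv ℝ (S.Jt m) (u n)‖ := by
    intro n
    refine ContinuousLinearMap.opNorm_le_bound _ (norm_nonneg (fderiv ℝ (S.Jt m) (u n))) (fun x => ?_)
    have h1 : fderiv ℝ S.J (m (u n : X)) x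
        = fderiv ℝ S.J (m (u n : X)) (S.P x) + fderiv ℝ S.J (m (u n : X)) (S.Pm x) := by
      rw [← map_add, S.P_add_Pm x]
    have h2 : fderiv ℝ S.J (m (u n : X)) (S.Pm x) = 0 := by
      rw [S.fderivJ_Xm _ (S.Pm_mem x), part1 n _ (S.Pm_mem x), neg_zero]
    have h3 : fderiv ℝ S.J (m (u n : X)) (S.P x)
        = fderiv ℝ (S.Jt m) (u n) (S.Pp x) := by
      rw [hfder n]
      rfl
    calc ‖fderiv ℝ S.J (m (u n : X)) x‖ = ‖fderiv ℝ (S.Jt m) (u n) (S.Pp x)‖ := by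
          rw [h1, h2, add_zero, h3]
    _ ≤ ‖fderiv ℝ (S.Jt m) (u n)‖ * ‖S.Pp x‖ := (fderiv ℝ (S.Jt m) (u n)).le_opNorm _
    _ = ‖fderiv ℝ (S.Jt m) (u n)‖ * ‖S.P x‖ := by rw [S.norm_Pp]
    _ ≤ ‖fderiv ℝ (S.Jt m) (u n)‖ * ‖x‖ := by
        have h4 := S.norm_P_le x
        have h5 : (0:ℝ) ≤ ‖fderiv ℝ (S.Jt m) (u n)‖ := ContinuousLinearMap.opNorm_nonneg _
        exact mul_le_mul_of_nonneg_left h4 h5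
  exact squeeze_zero (fun n => norm_nonneg _) hbound hder
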